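/- If each of G_1 and G_2 is θ_{k+1}-immersion free, then any (≤k)-edge sum of G_1 and G_2 is θ_{k+1}-immersion free. -/

import Mathlib

/-- A walk in a multigraph given by its endpoint function `ends`:
`IsWalk ends u w l` means `l` is the list of edges of a walk from `u` to `w`. -/
inductive IsWalk {V E : Type*} (ends : E → Sym2 V) : V → V → List E → Prop
  | nil (v : V) : IsWalk ends v v []
  | cons {u v w : V} {e : E} {l : List E} :
      ends e = s(u, v) → IsWalk ends v w l → IsWalk ends u w (e :: l)

/-- `EdgeSep ends s x S A` : the edge set `A` meets every walk of length at most `s`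
from `x` to a vertex of `S`. -/
def EdgeSep {V E : Type*} (ends : E → Sym2 V) (s : ℕ∞) (x : V) (S : Set V) (A : Set E) : Prop :=
  ∀ y ∈ S, ∀ l : List E, IsWalk ends x y l → (l.length : ℕ∞) ≤ s → ∃ e ∈ l, e ∈ A

/-- A `(k,s)`-edge-hide-out: every edge set separating a vertex `x ∈ R` from `R \ {x}`
(at distance `s`) has at least `k` edges. -/
def IsHideout {V E : Type*} (ends : E → Sym2 V) (s : ℕ∞) (k : ℕ) (R : Set V) : Prop :=
  ∀ x ∈ R, ∀ A : Set E, EdgeSep ends s x (R \ {x}) A → k ≤ A.ncard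

/-- `G` admits a layout of `s`-edge-degeneracy at most `k`. -/
def LayoutWidthLE {V E : Type*} (ends : E → Sym2 V) (s : ℕ∞) (k : ℕ) : Prop :=
  ∃ (n : ℕ) (L : Fin n ≃ V), ∀ i : Fin n,
    ∃ A : Set E, A.ncard ≤ k ∧ EdgeSep ends s (L i) {v | ∃ j, j < i ∧ L j = v} A

/-- The `s`-edge-degeneracy `δ_e^s(G)`. -/
noncomputable def edgeDeg {V E : Type*} (ends : E → Sym2 V) (s : ℕ∞) : ℕ :=
  sInf {k | LayoutWidthLE ends s k}

/-- The edge-degree of a vertex (parallel edges counted with multiplicity). -/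
noncomputable def degE {V E : Type*} (ends : E → Sym2 V) (v : V) : ℕ :=
  {e : E | v ∈ ends e}.ncard
/-- The multigraph `θ_k`: two vertices joined by `k` parallel edges. -/
def thetaEnds (k : ℕ) : Fin k → Sym2 (Fin 2) := fun _ => s(0, 1)

/-- `H` is an immersion of `G`: an injection of the vertices of `H` into those of `G`
together with pairwise edge-disjoint trails of `G` realizing the edges of `H`. -/
def Immersion {V' E' V E : Type*} (ends' : E' → Sym2 V') (ends : E → Sym2 V) : Prop :=
  ∃ (φ : V' ↪ V) (P : E' → List E),
    (∀ e : E', ∃ u v : V', ends' e = s(u, v) ∧ IsWalk ends (φ u) (φ v) (P e) ∧ (P e).Nodup) ∧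
    ∀ e f : E', e ≠ f → ∀ x ∈ P e, x ∉ P f

/-- Restrict a `Sym2` to a subtype, given that both elements satisfy the predicate. -/
noncomputable def sym2Restrict {α : Type*} {P : α → Prop} (p : Sym2 α) (h : ∀ a ∈ p, P a) :
    Sym2 {a // P a} :=
  s(⟨p.out.1, h _ (Sym2.out_fst_mem p)⟩, ⟨p.out.2, h _ (Sym2.out_snd_mem p)⟩)

/-- The endpoint of an edge incident to `v` other than `v` (well defined for loopless graphs). -/
noncomputable def otherEnd {V E : Type*} (ends : E → Sym2 V)
    (hl : ∀ e, ¬ (ends e).IsDiag) (v : V) (e : {e : E // v ∈ ends e}) : {u : V // u ≠ v} :=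
  ⟨Sym2.Mem.other e.2, Sym2.other_ne (hl e.1) e.2⟩

/-- The endpoint function of the `k'`-edge sum of `G₁` and `G₂` on `v₁` and `v₂` with
respect to the bijection `σ` between the edges incident to `v₁` and those incident to `v₂`:
the identified vertex is deleted and each pair `e, σ e` of incident edges is lifted to a
single new edge. -/
noncomputable def edgeSumEnds {V₁ E₁ V₂ E₂ : Type*}
    (ends₁ : E₁ → Sym2 V₁) (ends₂ : E₂ → Sym2 V₂)
    (hl₁ : ∀ e, ¬ (ends₁ e).IsDiag) (hl₂ : ∀ e, ¬ (ends₂ e).IsDiag)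
    (v₁ : V₁) (v₂ : V₂)
    (σ : {e : E₁ // v₁ ∈ ends₁ e} ≃ {e : E₂ // v₂ ∈ ends₂ e}) :
    ({e : E₁ // v₁ ∉ ends₁ e} ⊕ {e : E₂ // v₂ ∉ ends₂ e} ⊕ {e : E₁ // v₁ ∈ ends₁ e}) →
      Sym2 ({u : V₁ // u ≠ v₁} ⊕ {u : V₂ // u ≠ v₂})
  | Sum.inl e => (sym2Restrict (P := fun a => a ≠ v₁) (ends₁ e.1)
      (fun a ha hav => e.2 (hav ▸ ha))).map Sum.inl
  | Sum.inr (Sum.inl e) => (sym2Restrict (P := fun a => a ≠ v₂) (ends₂ e.1)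
      (fun a ha hav => e.2 (hav ▸ ha))).map Sum.inr
  | Sum.inr (Sum.inr e) =>
      s(Sum.inl (otherEnd ends₁ hl₁ v₁ e), Sum.inr (otherEnd ends₂ hl₂ v₂ (σ e)))

/-- The endpoint function of the disjoint union of `G₁` and `G₂`. -/
def disjUnionEnds {V₁ E₁ V₂ E₂ : Type*} (ends₁ : E₁ → Sym2 V₁) (ends₂ : E₂ → Sym2 V₂) :
    E₁ ⊕ E₂ → Sym2 (V₁ ⊕ V₂) :=
  Sum.elim (fun e => (ends₁ e).map Sum.inl) (fun e => (ends₂ e).map Sum.inr)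

/-! Project an immersion of `θ_{k+1}`, i.e. `k + 1` edge-disjoint trails between two distinct
vertices, onto the two summands: dropping the edges of the other side and keeping the `G₁`-half
of each lifted edge turns walks of the sum into walks of `G₁` (symmetrically for `G₂`), where
the part of a walk on the other side collapses onto `v₁`. If both ends of the trails lie on the
same side this is an immersion in that summand. Otherwise every trail crosses over, which only
the `k' ≤ k` lifted edges do (in a disjoint union none does), so there cannot be `k + 1`
edge-disjoint ones. -/

section Walks

variable {V E W F : Type*} {ends : E → Sym2 V} {ends' : F → Sym2 W}

theorem IsWalk.append {a b c : V} {l₁ l₂ : List E} (h₁ : IsWalk ends a b l₁)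
    (h₂ : IsWalk ends b c l₂) : IsWalk ends a c (l₁ ++ l₂) := by
  induction h₁ with
  | nil => exact h₂
  | cons he _ ih => exact .cons he (ih h₂)

theorem IsWalk.reverse {a b : V} {l : List E} (h : IsWalk ends a b l) :
    IsWalk ends b a l.reverse := by
  induction h with
  | nil v => exact .nil v
  | cons he _ ih =>
    rw [List.reverse_cons]
    exact ih.append (.cons (he.trans Sym2.eq_swap) (.nil _))

theorem IsWalk.apply_eq_of_forall_mem (t : V → W) {a b : V} {l : List E}
    (h : IsWalk ends a b l) (ht : ∀ e ∈ l, ((ends e).map t).IsDiag) : t a = t b := by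
  induction h with
  | nil => rfl
  | @cons u v w e l he _ ih =>
    have huv : t u = t v := by
      simpa only [he, Sym2.map_mk, Sym2.mk_isDiag_iff] using ht e List.mem_cons_self
    exact huv.trans (ih fun f hf => ht f (List.mem_cons_of_mem e hf))

structure WeakHom (ends : E → Sym2 V) (ends' : F → Sym2 W) where
  vert : V → W
  edge : E → Option F
  edge_inj : ∀ e e', ∀ f ∈ edge e, f ∈ edge e' → e = e'
  ends_some : ∀ e f, edge e = some f → ends' f = (ends e).map vert
  ends_none : ∀ e, edge e = none → ((ends e).map vert).IsDiag

theorem IsWalk.map (π : WeakHom ends ends') {a b : V} {l : List E} (h : IsWalk ends a b l) :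
    IsWalk ends' (π.vert a) (π.vert b) (l.filterMap π.edge) := by
  induction h with
  | nil v => exact .nil _
  | @cons u v w e l he _ ih =>
    rw [List.filterMap_cons]
    cases hπe : π.edge e with
    | none =>
      have huv := π.ends_none e hπe
      rw [he, Sym2.map_mk, Sym2.mk_isDiag_iff] at huv
      exact huv ▸ ih
    | some f => exact .cons (by rw [π.ends_some e f hπe, he, Sym2.map_mk]) ih

end Walks

section Trails

variable {V E W F : Type*} {ends : E → Sym2 V} {ends' : F → Sym2 W}

def HasEdgeDisjointTrails (ends : E → Sym2 V) (n : ℕ) (x y : V) : Prop :=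
  ∃ P : Fin n → List E, (∀ i, IsWalk ends x y (P i) ∧ (P i).Nodup) ∧
    Pairwise fun i j => (P i).Disjoint (P j)

theorem immersion_thetaEnds_iff {n : ℕ} :
    Immersion (thetaEnds n) ends ↔ ∃ x y, x ≠ y ∧ HasEdgeDisjointTrails ends n x y := by
  constructor
  · rintro ⟨φ, P, hP, hdisj⟩
    have hQ : ∀ i, ∃ l, (IsWalk ends (φ 0) (φ 1) l ∧ l.Nodup) ∧ ∀ e, e ∈ l ↔ e ∈ P i := by
      intro i
      obtain ⟨u, v, huv, hw, hnd⟩ := hP i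
      rcases Sym2.eq_iff.1 huv with ⟨rfl, rfl⟩ | ⟨rfl, rfl⟩
      · exact ⟨P i, ⟨hw, hnd⟩, fun _ => Iff.rfl⟩
      · exact ⟨(P i).reverse, ⟨hw.reverse, List.nodup_reverse.2 hnd⟩, fun _ => List.mem_reverse⟩
    choose Q hQ hmem using hQ
    refine ⟨φ 0, φ 1, φ.injective.ne (by decide), Q, hQ, fun i j hij e hi hj => ?_⟩
    exact hdisj i j hij e ((hmem i e).1 hi) ((hmem j e).1 hj)
  · rintro ⟨x, y, hxy, P, hP, hdisj⟩
    have hinj : Function.Injective ![x, y] := by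
      intro i j h
      fin_cases i <;> fin_cases j <;> simp_all [eq_comm]
    exact ⟨⟨![x, y], hinj⟩, P, fun i => ⟨0, 1, rfl, hP i⟩, fun i j hij => hdisj hij⟩

theorem HasEdgeDisjointTrails.map (π : WeakHom ends ends') {n : ℕ} {x y : V}
    (h : HasEdgeDisjointTrails ends n x y) :
    HasEdgeDisjointTrails ends' n (π.vert x) (π.vert y) := by
  obtain ⟨P, hP, hdisj⟩ := h
  refine ⟨fun i => (P i).filterMap π.edge, fun i => ⟨(hP i).1.map π,
    (hP i).2.filterMap π.edge_inj⟩, fun i j hij f hfi hfj => ?_⟩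
  obtain ⟨e, he, hef⟩ := List.mem_filterMap.1 hfi
  obtain ⟨e', he', hef'⟩ := List.mem_filterMap.1 hfj
  exact hdisj hij he (π.edge_inj e' e f hef' hef ▸ he')

/-- The easy direction of Menger's theorem. -/
theorem HasEdgeDisjointTrails.le_card {C : Type*} [Finite C] (ι : C → E) {n : ℕ} {x y : V}
    (h : HasEdgeDisjointTrails ends n x y) (hcut : ∀ l, IsWalk ends x y l → ∃ c, ι c ∈ l) :
    n ≤ Nat.card C := by
  obtain ⟨P, hP, hdisj⟩ := h
  choose c hc using fun i => hcut (P i) (hP i).1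
  have hinj : Function.Injective c := fun i j hij =>
    by_contra fun hne => hdisj hne (hc i) (hij ▸ hc j)
  simpa using Nat.card_le_card_of_injective c hinj

end Trails

theorem sym2Restrict_map_val {α : Type*} {P : α → Prop} (p : Sym2 α) (h : ∀ a ∈ p, P a) :
    (sym2Restrict p h).map Subtype.val = p := by
  rw [sym2Restrict, Sym2.map_mk]
  exact Quot.out_eq p

theorem isDiag_map_map_of_comp_eq_const {α β γ : Type*} (p : Sym2 α) {f : α → β} {g : β → γ}
    {c : γ} (h : g ∘ f = fun _ => c) : ((p.map f).map g).IsDiag := by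
  rw [Sym2.map_map, h]
  induction p using Sym2.ind
  exact Sym2.mk_isDiag_iff.2 rfl

theorem otherEnd_spec {V E : Type*} {ends : E → Sym2 V} (hl : ∀ e, ¬ (ends e).IsDiag) (v : V)
    (e : {e : E // v ∈ ends e}) : s(v, (otherEnd ends hl v e).1) = ends e.1 :=
  Sym2.other_spec e.2

section EdgeSum

variable {V₁ E₁ V₂ E₂ : Type*} {ends₁ : E₁ → Sym2 V₁} {ends₂ : E₂ → Sym2 V₂}
  {hl₁ : ∀ e, ¬ (ends₁ e).IsDiag} {hl₂ : ∀ e, ¬ (ends₂ e).IsDiag} {v₁ : V₁} {v₂ : V₂}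
  {σ : {e : E₁ // v₁ ∈ ends₁ e} ≃ {e : E₂ // v₂ ∈ ends₂ e}}

def edgeSumLeft : WeakHom (edgeSumEnds ends₁ ends₂ hl₁ hl₂ v₁ v₂ σ) ends₁ where
  vert := Sum.elim Subtype.val fun _ => v₁
  edge := Sum.elim (fun e => some e.1) (Sum.elim (fun _ => none) fun e => some e.1)
  edge_inj := by
    rintro (e | e | e) (e' | e' | e') f h h' <;>
      simp only [Sum.elim_inl, Sum.elim_inr, Option.mem_def, Option.some.injEq,
        reduceCtorEq] at h h' <;> subst h
    · rw [Subtype.ext h']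
    · exact (e.2 (h' ▸ e'.2)).elim
    · exact ((h' ▸ e'.2) e.2).elim
    · rw [Subtype.ext h']
  ends_some := by
    rintro (e | e | e) f h <;> simp only [Sum.elim_inl, Sum.elim_inr, Option.some.injEq,
      reduceCtorEq] at h <;> subst h <;> simp only [edgeSumEnds, Sym2.map_map]
    · exact (sym2Restrict_map_val _ _).symm
    · rw [Sym2.map_mk, Sum.elim_inl, Sum.elim_inr, ← otherEnd_spec hl₁ v₁ e]
      exact Sym2.eq_swap
  ends_none := by
    rintro (e | e | e) h <;> simp only [Sum.elim_inl, Sum.elim_inr, reduceCtorEq] at h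
    exact isDiag_map_map_of_comp_eq_const _ rfl

def edgeSumRight : WeakHom (edgeSumEnds ends₁ ends₂ hl₁ hl₂ v₁ v₂ σ) ends₂ where
  vert := Sum.elim (fun _ => v₂) Subtype.val
  edge := Sum.elim (fun _ => none) (Sum.elim (fun e => some e.1) fun e => some (σ e).1)
  edge_inj := by
    rintro (e | e | e) (e' | e' | e') f h h' <;>
      simp only [Sum.elim_inl, Sum.elim_inr, Option.mem_def, Option.some.injEq,
        reduceCtorEq] at h h' <;> subst h
    · rw [Subtype.ext h']
    · exact (e.2 (h' ▸ (σ e').2)).elim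
    · exact ((h' ▸ e'.2) (σ e).2).elim
    · rw [σ.injective (Subtype.ext h')]
  ends_some := by
    rintro (e | e | e) f h <;> simp only [Sum.elim_inl, Sum.elim_inr, Option.some.injEq,
      reduceCtorEq] at h <;> subst h <;> simp only [edgeSumEnds, Sym2.map_map]
    · exact (sym2Restrict_map_val _ _).symm
    · exact (otherEnd_spec hl₂ v₂ (σ e)).symm
  ends_none := by
    rintro (e | e | e) h <;> simp only [Sum.elim_inl, Sum.elim_inr, reduceCtorEq] at h
    exact isDiag_map_map_of_comp_eq_const _ rfl

theorem IsWalk.exists_lift_mem_of_edgeSum {a b l}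
    (h : IsWalk (edgeSumEnds ends₁ ends₂ hl₁ hl₂ v₁ v₂ σ) a b l) (hab : a.isLeft ≠ b.isLeft) :
    ∃ e, Sum.inr (Sum.inr e) ∈ l := by
  by_contra! hlift
  refine hab (h.apply_eq_of_forall_mem Sum.isLeft ?_)
  rintro (e | e | e) he
  · exact isDiag_map_map_of_comp_eq_const _ rfl
  · exact isDiag_map_map_of_comp_eq_const _ rfl
  · exact (hlift e he).elim

theorem not_immersion_thetaEnds_edgeSum [Finite E₁] {k : ℕ}
    (hfree₁ : ¬ Immersion (thetaEnds (k + 1)) ends₁)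
    (hfree₂ : ¬ Immersion (thetaEnds (k + 1)) ends₂)
    (hdeg : Nat.card {e : E₁ // v₁ ∈ ends₁ e} ≤ k) :
    ¬ Immersion (thetaEnds (k + 1)) (edgeSumEnds ends₁ ends₂ hl₁ hl₂ v₁ v₂ σ) := by
  rw [immersion_thetaEnds_iff]
  rintro ⟨x | x, y | y, hxy, hP⟩
  · refine hfree₁ (immersion_thetaEnds_iff.2 ⟨x, y, ?_, hP.map edgeSumLeft⟩)
    exact fun h => hxy (congrArg Sum.inl (Subtype.ext h))
  · have := hP.le_card _ fun l hl => hl.exists_lift_mem_of_edgeSum (by simp)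
    omega
  · have := hP.le_card _ fun l hl => hl.exists_lift_mem_of_edgeSum (by simp)
    omega
  · refine hfree₂ (immersion_thetaEnds_iff.2 ⟨x, y, ?_, hP.map edgeSumRight⟩)
    exact fun h => hxy (congrArg Sum.inr (Subtype.ext h))

end EdgeSum

section DisjUnion

variable {V₁ E₁ V₂ E₂ : Type*} {ends₁ : E₁ → Sym2 V₁} {ends₂ : E₂ → Sym2 V₂}

def disjUnionLeft (d : V₁) : WeakHom (disjUnionEnds ends₁ ends₂) ends₁ where
  vert := Sum.elim id fun _ => d
  edge := Sum.getLeft?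
  edge_inj := by
    rintro (e | e) (e' | e') f h h' <;> simp only [Sum.getLeft?_inl, Sum.getLeft?_inr,
      Option.mem_def, Option.some.injEq, reduceCtorEq] at h h'
    rw [h, h']
  ends_some := by
    rintro (e | e) f h <;> simp only [Sum.getLeft?_inl, Sum.getLeft?_inr, Option.some.injEq,
      reduceCtorEq] at h
    rw [← h, disjUnionEnds, Sum.elim_inl, Sym2.map_map, Sum.elim_comp_inl, Sym2.map_id, id_eq]
  ends_none := by
    rintro (e | e) h <;> simp only [Sum.getLeft?_inl, Sum.getLeft?_inr, reduceCtorEq] at h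
    exact isDiag_map_map_of_comp_eq_const _ rfl

def disjUnionRight (d : V₂) : WeakHom (disjUnionEnds ends₁ ends₂) ends₂ where
  vert := Sum.elim (fun _ => d) id
  edge := Sum.getRight?
  edge_inj := by
    rintro (e | e) (e' | e') f h h' <;> simp only [Sum.getRight?_inl, Sum.getRight?_inr,
      Option.mem_def, Option.some.injEq, reduceCtorEq] at h h'
    rw [h, h']
  ends_some := by
    rintro (e | e) f h <;> simp only [Sum.getRight?_inl, Sum.getRight?_inr, Option.some.injEq,
      reduceCtorEq] at h
    rw [← h, disjUnionEnds, Sum.elim_inr, Sym2.map_map, Sum.elim_comp_inr, Sym2.map_id, id_eq]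
  ends_none := by
    rintro (e | e) h <;> simp only [Sum.getRight?_inl, Sum.getRight?_inr, reduceCtorEq] at h
    exact isDiag_map_map_of_comp_eq_const _ rfl

theorem IsWalk.isLeft_eq_of_disjUnion {a b : V₁ ⊕ V₂} {l : List (E₁ ⊕ E₂)}
    (h : IsWalk (disjUnionEnds ends₁ ends₂) a b l) : a.isLeft = b.isLeft := by
  refine h.apply_eq_of_forall_mem Sum.isLeft ?_
  rintro (e | e) -
  · exact isDiag_map_map_of_comp_eq_const _ rfl
  · exact isDiag_map_map_of_comp_eq_const _ rfl

theorem not_immersion_thetaEnds_disjUnion {n : ℕ}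
    (hfree₁ : ¬ Immersion (thetaEnds (n + 1)) ends₁)
    (hfree₂ : ¬ Immersion (thetaEnds (n + 1)) ends₂) :
    ¬ Immersion (thetaEnds (n + 1)) (disjUnionEnds ends₁ ends₂) := by
  rw [immersion_thetaEnds_iff]
  rintro ⟨x | x, y | y, hxy, hP⟩
  · exact hfree₁ (immersion_thetaEnds_iff.2
      ⟨x, y, fun h => hxy (congrArg Sum.inl h), hP.map (disjUnionLeft x)⟩)
  · obtain ⟨P, hP, -⟩ := hP
    simpa using (hP 0).1.isLeft_eq_of_disjUnion
  · obtain ⟨P, hP, -⟩ := hP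
    simpa using (hP 0).1.isLeft_eq_of_disjUnion
  · exact hfree₂ (immersion_thetaEnds_iff.2
      ⟨x, y, fun h => hxy (congrArg Sum.inr h), hP.map (disjUnionRight x)⟩)

end DisjUnion

theorem edgeSum_theta_free_general {V₁ E₁ V₂ E₂ : Type*}
    [Finite E₁]
    (ends₁ : E₁ → Sym2 V₁) (ends₂ : E₂ → Sym2 V₂)
    (hl₁ : ∀ e, ¬ (ends₁ e).IsDiag) (hl₂ : ∀ e, ¬ (ends₂ e).IsDiag)
    (k : ℕ)
    (hfree₁ : ¬ Immersion (thetaEnds (k + 1)) ends₁)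
    (hfree₂ : ¬ Immersion (thetaEnds (k + 1)) ends₂) :
    (∀ (v₁ : V₁) (v₂ : V₂) (σ : {e : E₁ // v₁ ∈ ends₁ e} ≃ {e : E₂ // v₂ ∈ ends₂ e}),
      Nat.card {e : E₁ // v₁ ∈ ends₁ e} ≤ k →
      ¬ Immersion (thetaEnds (k + 1)) (edgeSumEnds ends₁ ends₂ hl₁ hl₂ v₁ v₂ σ)) ∧
    ¬ Immersion (thetaEnds (k + 1)) (disjUnionEnds ends₁ ends₂) :=
  ⟨fun _ _ _ hdeg => not_immersion_thetaEnds_edgeSum hfree₁ hfree₂ hdeg,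
    not_immersion_thetaEnds_disjUnion hfree₁ hfree₂⟩

/-- a `(≤k)`-edge sum (including a disjoint union) of two
`θ_{k+1}`-immersion-free graphs is `θ_{k+1}`-immersion free. -/
theorem edgeSum_theta_free {V₁ E₁ V₂ E₂ : Type*}
    [Finite V₁] [Finite E₁] [Finite V₂] [Finite E₂]
    (ends₁ : E₁ → Sym2 V₁) (ends₂ : E₂ → Sym2 V₂)
    (hl₁ : ∀ e, ¬ (ends₁ e).IsDiag) (hl₂ : ∀ e, ¬ (ends₂ e).IsDiag)
    (k : ℕ)
    (hfree₁ : ¬ Immersion (thetaEnds (k + 1)) ends₁)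
    (hfree₂ : ¬ Immersion (thetaEnds (k + 1)) ends₂) :
    (∀ (v₁ : V₁) (v₂ : V₂) (σ : {e : E₁ // v₁ ∈ ends₁ e} ≃ {e : E₂ // v₂ ∈ ends₂ e}),
      Nat.card {e : E₁ // v₁ ∈ ends₁ e} ≤ k →
      ¬ Immersion (thetaEnds (k + 1)) (edgeSumEnds ends₁ ends₂ hl₁ hl₂ v₁ v₂ σ)) ∧
    ¬ Immersion (thetaEnds (k + 1)) (disjUnionEnds ends₁ ends₂) :=
  edgeSum_theta_free_general ends₁ ends₂ hl₁ hl₂ k hfree₁ hfree₂
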